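/- Let Q_m(r,t), m ∈ ℕ, be a sequence of polynomials in two variables satisfying the recursion Q_{m+1}(r,t) = A_m(r,t)·Q_m(r,t) + B(r,t)·∂Q_m/∂r(r,t), where A_m(r,t) = 1 − (α+1)r² + α r t for some fixed α > 0 and B(r,t) = (1 + r² − 2rt)·r. Assume Q_1(1,1) = 0 and ∂Q_1/∂r(r,1)|_{r=1} ≠ 0. Then for every m ≥ 2, the one-variable polynomial t ↦ Q_m(1,t) has a root at t = 1 of multiplicity at least ⌊(m+1)/2⌋. -/
import Mathlib

open MvPolynomial

namespace QmAux

noncomputable section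

abbrev R2 := MvPolynomial (Fin 2) ℝ

def s : R2 := X 1 - 1
def u : R2 := X 0 - 1

lemma Ds : pderiv (0 : Fin 2) s = 0 := by
  simp [s, pderiv_X]

lemma Du : pderiv (0 : Fin 2) u = 1 := by
  simp [u, pderiv_X]

lemma D_su (a c : ℕ) : pderiv (0:Fin 2) (s^a * u^c) = (c : R2) * (s^a * u^(c-1)) := by
  rw [pderiv_mul, pderiv_pow, pderiv_pow, Ds, Du]; ring

def Ap (α : ℝ) : R2 := 1 - C (α+1) * X 0 ^ 2 + C α * X 0 * X 1
def Bp : R2 := (1 + X 0 ^ 2 - 2 * X 0 * X 1) * X 0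

lemma Ap_eq (α : ℝ) : Ap α = 1 - (C α + 1) * X 0 ^ 2 + C α * X 0 * X 1 := by
  rw [Ap, map_add, map_one]

def GE (k : ℕ) : Set R2 := {p | ∃ a b : ℕ, a + b = k ∧ p = s ^ a * u ^ (2*b)}
def GO (k : ℕ) : Set R2 :=
  {p | ∃ a b : ℕ, a + b = k ∧ (p = s ^ (a+1) * u ^ (2*b) ∨ p = s ^ a * u ^ (2*b+1))}

lemma step_mem {S : Set R2} {J : Ideal R2} {A B : R2}
    (h : ∀ g ∈ S, A * g + B * pderiv 0 g ∈ J ∧ B * g ∈ J) :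
    ∀ Q ∈ Ideal.span S, A * Q + B * pderiv 0 Q ∈ J ∧ B * Q ∈ J := by
  intro Q hQ
  induction hQ using Submodule.span_induction with
  | mem x hx => exact h x hx
  | zero => simp
  | add x y hx hy ihx ihy =>
      refine ⟨?_, ?_⟩
      · have e : A * (x + y) + B * pderiv 0 (x+y)
            = (A*x + B*pderiv 0 x) + (A*y + B*pderiv 0 y) := by
          rw [map_add]; ring
        rw [e]; exact Ideal.add_mem _ ihx.1 ihy.1
      · rw [mul_add]; exact Ideal.add_mem _ ihx.2 ihy.2
  | smul c x hx ih =>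
      refine ⟨?_, ?_⟩
      · have e : A * (c • x) + B * pderiv 0 (c • x)
            = c * (A*x + B*pderiv 0 x) + pderiv 0 c * (B * x) := by
          rw [smul_eq_mul, pderiv_mul]; ring
        rw [e]
        exact Ideal.add_mem _ (Ideal.mul_mem_left _ _ ih.1) (Ideal.mul_mem_left _ _ ih.2)
      · rw [smul_eq_mul, show B * (c*x) = c * (B*x) by ring]
        exact Ideal.mul_mem_left _ _ ih.2

lemma memc {J : Ideal R2} {x g c : R2} (hg : g ∈ J) (h : x = c * g) : x ∈ J :=
  h ▸ Ideal.mul_mem_left _ c hg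

lemma memc2 {J : Ideal R2} {x g1 g2 c1 c2 : R2} (h1 : g1 ∈ J) (h2 : g2 ∈ J)
    (h : x = c1 * g1 + c2 * g2) : x ∈ J :=
  h ▸ Ideal.add_mem _ (Ideal.mul_mem_left _ c1 h1) (Ideal.mul_mem_left _ c2 h2)

lemma memc3 {J : Ideal R2} {x g1 g2 g3 c1 c2 c3 : R2} (h1 : g1 ∈ J) (h2 : g2 ∈ J)
    (h3 : g3 ∈ J) (h : x = c1 * g1 + c2 * g2 + c3 * g3) : x ∈ J :=
  h ▸ Ideal.add_mem _ (Ideal.add_mem _ (Ideal.mul_mem_left _ c1 h1)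
    (Ideal.mul_mem_left _ c2 h2)) (Ideal.mul_mem_left _ c3 h3)

/-- even step: from `GE k` the operator lands in span of `GO k`. -/
lemma stepEO (α : ℝ) (k : ℕ) : ∀ g ∈ GE k,
    (Ap α * g + Bp * pderiv 0 g ∈ Ideal.span (GO k)) ∧ Bp * g ∈ Ideal.span (GO k) := by
  rintro g ⟨a, b, hab, rfl⟩
  have m1 : s ^ a * u ^ (2*b+1) ∈ Ideal.span (GO k) :=
    Ideal.subset_span ⟨a, b, hab, Or.inr rfl⟩
  have m2 : s ^ (a+1) * u ^ (2*b) ∈ Ideal.span (GO k) :=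
    Ideal.subset_span ⟨a, b, hab, Or.inl rfl⟩
  constructor
  · rcases b with _ | b'
    · -- b = 0
      rw [D_su]
      refine memc2 m1 m2 (c1 := -(C α + 2) - (C α + 1)*u) (c2 := C α * (1+u)) ?_
      rw [Ap_eq]
      simp only [s, u, Bp]
      push_cast
      ring
    · rw [D_su, show 2*(b'+1) - 1 = 2*b'+1 by omega]
      have m3 : s ^ (a+1) * u ^ (2*b'+1) ∈ Ideal.span (GO k) :=
        Ideal.subset_span ⟨a+1, b', by omega, Or.inr rfl⟩
      refine memc3 m1 m2 m3
        (c1 := -(C α + 2) - (C α + 1)*u + (2*((b' : R2)+1))*(1+u))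
        (c2 := C α * (1+u))
        (c3 := -(4*((b' : R2)+1))*(1+u)^2) ?_
      rw [Ap_eq]
      simp only [s, u, Bp]
      push_cast
      ring
  · refine memc2 m1 m2 (c1 := (1+u)*u) (c2 := -2*(1+u)^2) ?_
    simp only [s, u, Bp]
    ring

/-- odd step: from `GO k` the operator lands in span of `GE (k+1)`. -/
lemma stepOE (α : ℝ) (k : ℕ) : ∀ g ∈ GO k,
    (Ap α * g + Bp * pderiv 0 g ∈ Ideal.span (GE (k+1))) ∧ Bp * g ∈ Ideal.span (GE (k+1)) := by
  rintro g ⟨a, b, hab, hg | hg⟩ <;> subst hg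
  · -- g = s^(a+1) * u^(2b), itself a generator of GE (k+1)
    have m0 : s ^ (a+1) * u ^ (2*b) ∈ Ideal.span (GE (k+1)) :=
      Ideal.subset_span ⟨a+1, b, by omega, rfl⟩
    constructor
    · rcases b with _ | b'
      · rw [D_su]
        refine memc m0 (c := Ap α) ?_
        push_cast
        ring
      · rw [D_su, show 2*(b'+1) - 1 = 2*b'+1 by omega]
        have m3 : s ^ (a+2) * u ^ (2*b') ∈ Ideal.span (GE (k+1)) :=
          Ideal.subset_span ⟨a+2, b', by omega, rfl⟩
        refine memc2 m0 m3
          (c1 := Ap α + (2*((b' : R2)+1))*(1+u)*u)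
          (c2 := -(4*((b' : R2)+1))*(1+u)^2*u) ?_
        rw [Ap_eq]
        simp only [s, u, Bp]
        push_cast
        ring
    · exact memc m0 (c := Bp) (by ring)
  · -- g = s^a * u^(2b+1)
    have m1 : s ^ a * u ^ (2*(b+1)) ∈ Ideal.span (GE (k+1)) :=
      Ideal.subset_span ⟨a, b+1, by omega, rfl⟩
    have m2 : s ^ (a+1) * u ^ (2*b) ∈ Ideal.span (GE (k+1)) :=
      Ideal.subset_span ⟨a+1, b, by omega, rfl⟩
    constructor
    · rw [D_su, show 2*b+1 - 1 = 2*b by omega]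
      refine memc2 m1 m2
        (c1 := -(C α + 2) - (C α + 1)*u + (2*(b : R2)+1)*(1+u))
        (c2 := C α * u * (1+u) - 2*(2*(b : R2)+1)*(1+u)^2) ?_
      rw [Ap_eq]
      simp only [s, u, Bp]
      push_cast
      ring
    · refine memc2 m1 m2 (c1 := (1+u)*u) (c2 := -2*(1+u)^2*u) ?_
      simp only [s, u, Bp]
      ring

def φ : R2 →ₐ[ℝ] Polynomial ℝ :=
  aeval (fun i : Fin 2 => if i = 0 then (1 : Polynomial ℝ) else Polynomial.X)

lemma φs : φ s = Polynomial.X - Polynomial.C 1 := by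
  simp [φ, s]

lemma φu : φ u = 0 := by
  simp [φ, u]

lemma dvd_of_mem_GE (k : ℕ) {q : R2} (hq : q ∈ Ideal.span (GE k)) :
    (Polynomial.X - Polynomial.C (1:ℝ)) ^ k ∣ φ q := by
  induction hq using Submodule.span_induction with
  | mem x hx =>
      obtain ⟨a, b, hab, rfl⟩ := hx
      rcases b with _ | b'
      · simp only [Nat.mul_zero, pow_zero, mul_one, map_pow, φs]
        rw [show a = k by omega]
      · rw [map_mul, map_pow, map_pow, φu]
        simp
  | zero => simp
  | add x y hx hy ihx ihy => rw [map_add]; exact dvd_add ihx ihy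
  | smul c x hx ih => rw [smul_eq_mul, map_mul]; exact Dvd.dvd.mul_left ih _

lemma dvd_of_mem_GO (k : ℕ) {q : R2} (hq : q ∈ Ideal.span (GO k)) :
    (Polynomial.X - Polynomial.C (1:ℝ)) ^ (k+1) ∣ φ q := by
  induction hq using Submodule.span_induction with
  | mem x hx =>
      obtain ⟨a, b, hab, hx | hx⟩ := hx <;> subst hx
      · rcases b with _ | b'
        · simp only [Nat.mul_zero, pow_zero, mul_one, map_pow, φs]
          rw [show a + 1 = k + 1 by omega]
        · rw [map_mul, map_pow, map_pow, φu]; simp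
      · rw [map_mul, map_pow, map_pow, φu]; simp
  | zero => simp
  | add x y hx hy ihx ihy => rw [map_add]; exact dvd_add ihx ihy
  | smul c x hx ih => rw [smul_eq_mul, map_mul]; exact Dvd.dvd.mul_left ih _

lemma eval_one_mem (p : R2) (hp : eval (fun _ => (1:ℝ)) p = 0) :
    p ∈ Ideal.span (GO 0) := by
  have hsub : {q : R2 | ∃ i : Fin 2, q = X i - 1} ⊆ GO 0 := by
    rintro q ⟨i, rfl⟩
    fin_cases i
    · exact ⟨0, 0, rfl, Or.inr (by simp [u])⟩
    · exact ⟨0, 0, rfl, Or.inl (by simp [s])⟩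
  refine Ideal.span_mono hsub ?_
  have key : ∀ p : R2, p - C (eval (fun _ => (1:ℝ)) p)
      ∈ Ideal.span {q : R2 | ∃ i : Fin 2, q = X i - 1} := by
    intro p
    induction p using MvPolynomial.induction_on with
    | C a => simp
    | add p q hp hq =>
        have e : p + q - C (eval (fun _ => (1:ℝ)) (p + q))
            = (p - C (eval (fun _ => (1:ℝ)) p)) + (q - C (eval (fun _ => (1:ℝ)) q)) := by
          rw [map_add, map_add]; ring
        rw [e]; exact Ideal.add_mem _ hp hq
    | mul_X p i hp =>
        have e : p * X i - C (eval (fun _ => (1:ℝ)) (p * X i))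
            = (p - C (eval (fun _ => (1:ℝ)) p)) * X i
              + C (eval (fun _ => (1:ℝ)) p) * (X i - 1) := by
          rw [eval_mul, eval_X, map_mul]
          simp only [map_one, mul_one]
          ring
        rw [e]
        exact Ideal.add_mem _ (Ideal.mul_mem_right _ _ hp)
          (Ideal.mul_mem_left _ _ (Ideal.subset_span ⟨i, rfl⟩))
  have := key p
  rwa [hp, map_zero, sub_zero] at this

end

end QmAux

open QmAux
/-- the polynomials `Q_m(1,·)` have a root of multiplicity at least
`⌊(m+1)/2⌋` at `t = 1`. -/
theorem Qm_multiple_root (α : ℝ) (hα : 0 < α) (Q : ℕ → MvPolynomial (Fin 2) ℝ)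
    (hrec : ∀ m, 1 ≤ m → Q (m+1) =
      (1 - C (α+1) * X 0 ^ 2 + C α * X 0 * X 1) * Q m
        + ((1 + X 0 ^ 2 - 2 * X 0 * X 1) * X 0) * pderiv 0 (Q m))
    (h1 : eval (fun _ => (1:ℝ)) (Q 1) = 0)
    (h2 : eval (fun _ => (1:ℝ)) (pderiv 0 (Q 1)) ≠ 0) :
    ∀ m, 2 ≤ m →
      (Polynomial.X - Polynomial.C (1:ℝ)) ^ ((m+1)/2) ∣
        MvPolynomial.aeval
          (fun i : Fin 2 => if i = 0 then (1 : Polynomial ℝ) else Polynomial.X) (Q m) := by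
  have chain : ∀ k : ℕ, Q (2*k+1) ∈ Ideal.span (GO k) ∧ Q (2*k+2) ∈ Ideal.span (GE (k+1)) := by
    intro k
    induction k with
    | zero =>
        have hQ1 : Q 1 ∈ Ideal.span (GO 0) := eval_one_mem (Q 1) h1
        refine ⟨hQ1, ?_⟩
        rw [hrec 1 le_rfl]
        exact (step_mem (stepOE α 0) (Q 1) hQ1).1
    | succ k ih =>
        have hodd : Q (2*(k+1)+1) ∈ Ideal.span (GO (k+1)) := by
          rw [show 2*(k+1)+1 = (2*k+2)+1 by ring, hrec (2*k+2) (by omega)]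
          exact (step_mem (stepEO α (k+1)) _ ih.2).1
        refine ⟨hodd, ?_⟩
        rw [show 2*(k+1)+2 = (2*(k+1)+1)+1 by ring, hrec (2*(k+1)+1) (by omega)]
        exact (step_mem (stepOE α (k+1)) _ hodd).1
  intro m hm
  obtain ⟨k, hk | hk⟩ : ∃ k, m = 2*k+2 ∨ m = 2*k+3 := ⟨(m-2)/2, by omega⟩
  · subst hk
    rw [show (2*k+2+1)/2 = k+1 by omega]
    exact dvd_of_mem_GE (k+1) (chain k).2
  · subst hk
    rw [show (2*k+3+1)/2 = k+2 by omega]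
    exact dvd_of_mem_GO (k+1) (show Q (2*(k+1)+1) ∈ _ from (chain (k+1)).1)
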